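/- With the same hypotheses, for x ∈ A[N₀] and m ∈ M and t ∈ L₊ one has ψₜ(x·m) = ∑_{u ∈ J(N₀/tN₀t⁻¹)} ψₜ(x·u) · ψₜ(u⁻¹·m), where J(N₀/tN₀t⁻¹) is any set of representatives of the cosets N₀/tN₀t⁻¹. -/

import Mathlib

open scoped Classical

/-!
By étaleness `M` is spanned by the elements `w · φ(m₀)`, and both sides are additive in `m`, so
it suffices to treat `m = w · φ(m₀)`. The compatibility of `φ` with the `N₀`-action and the
vanishing of `ψ` off `N₀ ∩ tN₀t⁻¹` give `ψ(y · φ(m₀)) = ψ(y) · m₀` for every `y ∈ A[N₀]`. Both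
sides thereby become `ψ(...) · m₀` for elements of `A[N₀]`, and the claim reduces to an identity
in `A[N₀]`: `ψ(y · u) = ψ(y) · ψ(u)` when `t⁻¹ut ∈ N₀`, while `ψ(u) = 0` otherwise, so only the
coset of `w` contributes to the sum and it contributes `ψ(x · w)`.
-/

variable {P : Type*} [Group P]

/-- The subgroup `N₀ ∩ tN₀t⁻¹` of `N₀`, i.e. those `u ∈ N₀` with `t⁻¹ u t ∈ N₀`. -/
def conjSub (N₀ : Subgroup P) (t : P) : Subgroup ↥N₀ where
  carrier := {u | t⁻¹ * (u : P) * t ∈ N₀}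
  one_mem' := by simpa using N₀.one_mem
  mul_mem' := by
    intro a b ha hb
    show t⁻¹ * ((a * b : ↥N₀) : P) * t ∈ N₀
    have h : t⁻¹ * ((a * b : ↥N₀) : P) * t = (t⁻¹ * (a : P) * t) * (t⁻¹ * (b : P) * t) := by
      push_cast; group
    rw [h]
    exact N₀.mul_mem ha hb
  inv_mem' := by
    intro a ha
    show t⁻¹ * ((a⁻¹ : ↥N₀) : P) * t ∈ N₀
    have h : t⁻¹ * ((a⁻¹ : ↥N₀) : P) * t = (t⁻¹ * (a : P) * t)⁻¹ := by
      push_cast; group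
    rw [h]
    exact N₀.inv_mem ha

/-- An `A[P₊]`-module `M` (with `N₀`-action `ρ`) is *étale* at `t` (acting by `φ`)
if `φ` is injective and `M = ⨁_{u ∈ J(N₀/tN₀t⁻¹)} u·φ(M)`. -/
def IsEtaleAt (A : Type*) [CommRing A] (N₀ : Subgroup P) (t : P)
    {M : Type*} [AddCommGroup M] [Module A M]
    (ρ : ↥N₀ → Module.End A M) (φ : Module.End A M) : Prop :=
  Function.Injective φ ∧
    DirectSum.IsInternal fun c : ↥N₀ ⧸ conjSub N₀ t =>
      LinearMap.range (ρ (Quotient.out c) * φ)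

/-- The canonical left inverse `ψₜ` of `φₜ` acting on the group algebra `A[N₀]`:
`ψₜ(single u a) = single (t⁻¹ut) a` if `u ∈ tN₀t⁻¹`, and `0` otherwise. -/
noncomputable def psiA (A : Type*) [CommRing A] (N₀ : Subgroup P) (t : P) :
    MonoidAlgebra A ↥N₀ →ₗ[A] MonoidAlgebra A ↥N₀ :=
  (MonoidAlgebra.coeffLinearEquiv A).symm.toLinearMap ∘ₗ (Finsupp.lsum A fun u : ↥N₀ =>
    if h : t⁻¹ * (u : P) * t ∈ N₀ then Finsupp.lsingle (⟨t⁻¹ * u * t, h⟩ : ↥N₀) else 0) ∘ₗ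
    (MonoidAlgebra.coeffLinearEquiv A).toLinearMap

section

open MonoidAlgebra

variable {A : Type*} [CommRing A] {N₀ : Subgroup P} {t : P}

theorem psiA_single (u : ↥N₀) (a : A) :
    psiA A N₀ t (single u a) =
      if h : u ∈ conjSub N₀ t then single (⟨t⁻¹ * u * t, h⟩ : ↥N₀) a else 0 := by
  simp only [psiA, LinearMap.comp_apply, LinearEquiv.coe_coe, coeffLinearEquiv_apply,
    coeff_single, coeffLinearEquiv_symm_apply, Finsupp.lsum_single]
  by_cases h : u ∈ conjSub N₀ t
  · rw [dif_pos h, dif_pos (show t⁻¹ * (u : P) * t ∈ N₀ from h)]; rfl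
  · rw [dif_neg h, dif_neg (show t⁻¹ * (u : P) * t ∉ N₀ from h)]; rfl

theorem psiA_single_of_notMem {u : ↥N₀} (hu : u ∉ conjSub N₀ t) (a : A) :
    psiA A N₀ t (single u a) = 0 := by
  rw [psiA_single, dif_neg hu]

theorem psiA_mul_single_of_mem (y : MonoidAlgebra A ↥N₀) {u : ↥N₀} (hu : u ∈ conjSub N₀ t)
    (a : A) : psiA A N₀ t (y * single u a) = psiA A N₀ t y * psiA A N₀ t (single u a) := by
  induction y using MonoidAlgebra.induction_linear with
  | zero => simp
  | add f g hf hg => rw [add_mul, map_add, map_add, hf, hg, add_mul]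
  | single v b =>
    have hvu : v * u ∈ conjSub N₀ t ↔ v ∈ conjSub N₀ t :=
      ⟨fun h => by simpa using (conjSub N₀ t).mul_mem h ((conjSub N₀ t).inv_mem hu),
        fun h => (conjSub N₀ t).mul_mem h hu⟩
    rw [single_mul_single, psiA_single, psiA_single, psiA_single, dif_pos hu]
    by_cases hv : v ∈ conjSub N₀ t
    · rw [dif_pos (hvu.2 hv), dif_pos hv, single_mul_single]
      congr 1
      ext
      simp only [Subgroup.coe_mul]
      group
    · rw [dif_neg (mt hvu.1 hv), dif_neg hv, zero_mul]

theorem sum_psiA_mul_single_rep_mul_psiA_single [Fintype (↥N₀ ⧸ conjSub N₀ t)]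
    {rep : ↥N₀ ⧸ conjSub N₀ t → ↥N₀} (hrep : ∀ c, QuotientGroup.mk (rep c) = c)
    (x : MonoidAlgebra A ↥N₀) (w : ↥N₀) :
    ∑ c : ↥N₀ ⧸ conjSub N₀ t,
        psiA A N₀ t (x * single (rep c) 1) * psiA A N₀ t (single ((rep c)⁻¹ * w) 1)
      = psiA A N₀ t (x * single w 1) := by
  have hmem : ∀ c, (rep c)⁻¹ * w ∈ conjSub N₀ t ↔ c = QuotientGroup.mk w := fun c => by
    rw [← QuotientGroup.eq, hrep]
  rw [Finset.sum_eq_single (QuotientGroup.mk w)]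
  · rw [← psiA_mul_single_of_mem _ ((hmem _).2 rfl), mul_assoc, single_mul_single,
      mul_inv_cancel_left, mul_one]
  · intro c _ hc
    rw [psiA_single_of_notMem (mt (hmem c).1 hc), mul_zero]
  · exact fun h => absurd (Finset.mem_univ _) h

variable {M : Type*} [AddCommGroup M] [Module A M] {ρ : ↥N₀ →* Module.End A M}
  {φ ψ : Module.End A M}

theorem psi_rho_phi_of_mem (hstab : ∀ u : P, u ∈ N₀ → t * u * t⁻¹ ∈ N₀)
    (hcompat : ∀ (u : ↥N₀) (m : M), φ (ρ u m) = ρ ⟨t * u * t⁻¹, hstab u u.2⟩ (φ m))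
    (hψφ : ψ * φ = 1) {w : ↥N₀} (hw : w ∈ conjSub N₀ t) (m : M) :
    ψ (ρ w (φ m)) = ρ ⟨t⁻¹ * w * t, hw⟩ m := by
  have hconj : (⟨t * (t⁻¹ * w * t) * t⁻¹, hstab _ hw⟩ : ↥N₀) = w := by
    ext
    simp only
    group
  calc ψ (ρ w (φ m)) = (ψ * φ) (ρ ⟨t⁻¹ * w * t, hw⟩ m) := by
        rw [Module.End.mul_apply, hcompat, hconj]
    _ = ρ ⟨t⁻¹ * w * t, hw⟩ m := by rw [hψφ, Module.End.one_apply]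

theorem psi_lift_phi (hstab : ∀ u : P, u ∈ N₀ → t * u * t⁻¹ ∈ N₀)
    (hcompat : ∀ (u : ↥N₀) (m : M), φ (ρ u m) = ρ ⟨t * u * t⁻¹, hstab u u.2⟩ (φ m))
    (hψφ : ψ * φ = 1)
    (hvanish : ∀ u : ↥N₀, u ∉ conjSub N₀ t → ∀ m : M, ψ (ρ u (φ m)) = 0)
    (y : MonoidAlgebra A ↥N₀) (m : M) :
    ψ (lift A (Module.End A M) ↥N₀ ρ y (φ m))
      = lift A (Module.End A M) ↥N₀ ρ (psiA A N₀ t y) m := by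
  induction y using MonoidAlgebra.induction_linear with
  | zero => simp
  | add f g hf hg => simp only [map_add, LinearMap.add_apply, hf, hg]
  | single v a =>
    rw [lift_single, LinearMap.smul_apply, map_smul, psiA_single]
    by_cases hv : v ∈ conjSub N₀ t
    · rw [dif_pos hv, lift_single, LinearMap.smul_apply,
        psi_rho_phi_of_mem hstab hcompat hψφ hv]
    · rw [dif_neg hv, hvanish v hv, smul_zero, map_zero, LinearMap.zero_apply]

theorem psi_lift_rho_phi_eq_sum (hstab : ∀ u : P, u ∈ N₀ → t * u * t⁻¹ ∈ N₀)
    (hcompat : ∀ (u : ↥N₀) (m : M), φ (ρ u m) = ρ ⟨t * u * t⁻¹, hstab u u.2⟩ (φ m))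
    (hψφ : ψ * φ = 1)
    (hvanish : ∀ u : ↥N₀, u ∉ conjSub N₀ t → ∀ m : M, ψ (ρ u (φ m)) = 0)
    [Fintype (↥N₀ ⧸ conjSub N₀ t)] {rep : ↥N₀ ⧸ conjSub N₀ t → ↥N₀}
    (hrep : ∀ c, QuotientGroup.mk (rep c) = c) (x : MonoidAlgebra A ↥N₀) (w : ↥N₀) (m : M) :
    ψ (lift A (Module.End A M) ↥N₀ ρ x (ρ w (φ m)))
      = ∑ c : ↥N₀ ⧸ conjSub N₀ t,
          lift A (Module.End A M) ↥N₀ ρ (psiA A N₀ t (x * single (rep c) 1))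
            (ψ (ρ (rep c)⁻¹ (ρ w (φ m)))) := by
  have hρ : ∀ (y : MonoidAlgebra A ↥N₀) (u : ↥N₀),
      lift A (Module.End A M) ↥N₀ ρ y (ρ u (φ m))
        = lift A (Module.End A M) ↥N₀ ρ (y * single u 1) (φ m) := fun y u => by
    rw [map_mul, Module.End.mul_apply, lift_single, one_smul]
  have hψ := psi_lift_phi hstab hcompat hψφ hvanish (m := m)
  calc ψ (lift A (Module.End A M) ↥N₀ ρ x (ρ w (φ m)))
      = lift A (Module.End A M) ↥N₀ ρ
          (∑ c, psiA A N₀ t (x * single (rep c) 1) * psiA A N₀ t (single ((rep c)⁻¹ * w) 1))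
          m := by
        rw [hρ, hψ, sum_psiA_mul_single_rep_mul_psiA_single hrep]
    _ = _ := by
        rw [map_sum, LinearMap.sum_apply]
        refine Finset.sum_congr rfl fun c _ => ?_
        rw [map_mul (lift A (Module.End A M) ↥N₀ ρ), Module.End.mul_apply, ← hψ, lift_single,
          one_smul, map_mul ρ, Module.End.mul_apply]

end

/-- **(Lemma 3.6 of the paper.)**  `ψₜ(x·m) = ∑_u ψₜ(x·u)·ψₜ(u⁻¹·m)`, the sum being
over any set of representatives `u = rep c` of the cosets `c ∈ N₀/tN₀t⁻¹`. -/
theorem psi_product_formula (A : Type*) [CommRing A] (N₀ : Subgroup P) (t : P)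
    (hstab : ∀ u : P, u ∈ N₀ → t * u * t⁻¹ ∈ N₀)
    {M : Type*} [AddCommGroup M] [Module A M]
    (ρ : ↥N₀ →* Module.End A M) (φ ψ : Module.End A M)
    (hcompat : ∀ (u : ↥N₀) (m : M), φ (ρ u m) = ρ ⟨t * u * t⁻¹, hstab u u.2⟩ (φ m))
    (hetale : IsEtaleAt A N₀ t (fun u => ρ u) φ)
    (hψφ : ψ * φ = 1)
    (hvanish : ∀ u : ↥N₀, u ∉ conjSub N₀ t → ∀ m : M, ψ (ρ u (φ m)) = 0)
    [Fintype (↥N₀ ⧸ conjSub N₀ t)]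
    (rep : ↥N₀ ⧸ conjSub N₀ t → ↥N₀)
    (hrep : ∀ c, QuotientGroup.mk (rep c) = c)
    (x : MonoidAlgebra A ↥N₀) (m : M) :
    ψ ((MonoidAlgebra.lift A (Module.End A M) ↥N₀ ρ) x m)
      = ∑ c : ↥N₀ ⧸ conjSub N₀ t,
          (MonoidAlgebra.lift A (Module.End A M) ↥N₀ ρ)
            (psiA A N₀ t (x * MonoidAlgebra.single (rep c) (1 : A)))
            (ψ (ρ (rep c)⁻¹ m)) := by
  have hm : m ∈ ⨆ c : ↥N₀ ⧸ conjSub N₀ t, LinearMap.range (ρ (Quotient.out c) * φ) := by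
    rw [hetale.2.submodule_iSup_eq_top]
    exact Submodule.mem_top
  induction hm using Submodule.iSup_induction' with
  | mem c m hm =>
    obtain ⟨m₀, rfl⟩ := hm
    exact psi_lift_rho_phi_eq_sum hstab hcompat hψφ hvanish hrep x _ m₀
  | zero => simp
  | add m₁ m₂ _ _ h₁ h₂ => simp only [map_add, h₁, h₂, Finset.sum_add_distrib]
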